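/- Let G be a graph with Edmonds–Gallai decomposition (D(G), A(G), C(G)), and form the bipartite graph G' with parts A(G) and the set D̃ of contracted components of G[D(G)], with an edge between a ∈ A(G) and component z whenever a has a neighbor in z. Given any fractional perfect matching on the A(G)-side of G' (each a ∈ A(G) distributes total weight 1 among incident edges, each component receives total weight at most 1), there exists a probability distribution over maximum matchings of G whose edge-marginals between A(G) and the components agree with the given fractional values. -/

import Mathlib

/-- `M` is a maximum matching of `G` (a matching covering the most vertices). -/
def IsMaxMatching {V : Type*} (G : SimpleGraph V) (M : G.Subgraph) : Prop :=
  M.IsMatching ∧ ∀ N : G.Subgraph, N.IsMatching → N.support.ncard ≤ M.support.ncard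

/-- `D(G)`: the set of vertices missed by at least one maximum matching of `G`. -/
def Dset {V : Type*} (G : SimpleGraph V) : Set V :=
  {v | ∃ M : G.Subgraph, IsMaxMatching G M ∧ v ∉ M.support}

/-- `A(G)`: vertices outside `D(G)` adjacent to a vertex of `D(G)`. -/
def Aset {V : Type*} (G : SimpleGraph V) : Set V :=
  {v | v ∉ Dset G ∧ ∃ u ∈ Dset G, G.Adj v u}

/-- `M` matches the vertex `a` into the component `z` of `G[D(G)]`. -/
def MatchesInto {V : Type*} (G : SimpleGraph V) (M : G.Subgraph) (a : V)
    (z : (G.induce (Dset G)).ConnectedComponent) : Prop :=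
  ∃ d : Dset G, (G.induce (Dset G)).connectedComponentMk d = z ∧ M.Adj a ↑d

/-!
Birkhoff's theorem, applied to the doubly stochastic completion of `p` on `A(G) ⊕ D̃`, writes
`p` as a convex combination of injections `A(G) → D̃` along edges of `G'`; it remains to realize
each such injection by a maximum matching of `G`.

Deleting the edges at some `a ∈ A(G)` (Gallai's stability lemma, proved with alternating paths)
moves `a` into `D` and leaves the rest of `A(G)`, `D(G)` and the components of `G[D(G)]` as
they were, while the matching number drops by one. By induction on `|A(G)|`, the other vertices
of `A(G)` are matched as prescribed in `G - a` with the target of `a` kept exposed, and then `a`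
is matched to its target. When `A(G) = ∅`, swapping along alternating paths gives a maximum
matching exposing any vertices chosen in distinct components of `G[D(G)]`.
-/

namespace SimpleGraph

open Classical

variable {V : Type*} {G H : SimpleGraph V}

/-- A matching of `G` recorded by its mate function: `mate v` is the partner of `v`, and
`mate v = v` when `v` is exposed. -/
structure MateFun (G : SimpleGraph V) where
  mate : V → V
  involutive : Function.Involutive mate
  adj_mate : ∀ v, mate v ≠ v → G.Adj v (mate v)

namespace MateFun

instance : Inhabited (MateFun G) := ⟨⟨id, fun _ => rfl, fun _ h => (h rfl).elim⟩⟩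

def support (M : MateFun G) : Set V := {v | M.mate v ≠ v}

variable {M N : MateFun G} {a b v : V}

@[simp] lemma mem_support : v ∈ M.support ↔ M.mate v ≠ v := Iff.rfl

lemma notMem_support : v ∉ M.support ↔ M.mate v = v := not_not

lemma mate_mem_support (hv : v ∈ M.support) : M.mate v ∈ M.support := fun h =>
  hv (M.involutive v ▸ h).symm

lemma reachable_mate (M : MateFun G) (v : V) : G.Reachable v (M.mate v) := by
  by_cases h : M.mate v = v
  · rw [h]
  · exact (M.adj_mate v h).reachable

def toSubgraph (M : MateFun G) : G.Subgraph where
  verts := M.support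
  Adj x y := x ≠ y ∧ M.mate x = y
  adj_sub := by rintro x _ ⟨hxy, rfl⟩; exact M.adj_mate x hxy.symm
  edge_vert := by rintro x _ ⟨hxy, rfl⟩; exact hxy.symm
  symm := ⟨by rintro x _ ⟨hxy, rfl⟩; exact ⟨hxy.symm, M.involutive x⟩⟩

lemma toSubgraph_adj {x y : V} : M.toSubgraph.Adj x y ↔ x ≠ y ∧ M.mate x = y := Iff.rfl

lemma isMatching_toSubgraph (M : MateFun G) : M.toSubgraph.IsMatching := fun v hv =>
  ⟨M.mate v, ⟨fun h => hv h.symm, rfl⟩, fun _ h => h.2.symm⟩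

lemma support_toSubgraph (M : MateFun G) : M.toSubgraph.support = M.support :=
  M.isMatching_toSubgraph.support_eq_verts

noncomputable def ofIsMatching {M : G.Subgraph} (hM : M.IsMatching) : MateFun G where
  mate v := if h : ∃ w, M.Adj v w then h.choose else v
  involutive v := by
    by_cases h : ∃ w, M.Adj v w
    · have hw : M.Adj h.choose v := h.choose_spec.symm
      have h' : ∃ u, M.Adj h.choose u := ⟨v, hw⟩
      simp only [dif_pos h, dif_pos h']
      exact (hM (M.edge_vert hw)).unique h'.choose_spec hw
    · simp only [dif_neg h]
  adj_mate v hv := by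
    by_cases h : ∃ w, M.Adj v w
    · simp only [dif_pos h]
      exact M.adj_sub h.choose_spec
    · simp [dif_neg h] at hv

lemma support_ofIsMatching {M : G.Subgraph} (hM : M.IsMatching) :
    (ofIsMatching hM).support = M.support := by
  ext v
  by_cases h : ∃ w, M.Adj v w
  · simp only [mem_support, ofIsMatching, Subgraph.mem_support, h, iff_true]
    exact (M.adj_sub h.choose_spec).ne'
  · simp [ofIsMatching, Subgraph.mem_support, h]

def mapLE (h : G ≤ H) (M : MateFun G) : MateFun H :=
  ⟨M.mate, M.involutive, fun v hv => h (M.adj_mate v hv)⟩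

@[simp] lemma support_mapLE (h : G ≤ H) (M : MateFun G) : (M.mapLE h).support = M.support := rfl

lemma notMem_support_of_deleteIncidenceSet (M : MateFun (G.deleteIncidenceSet a)) :
    a ∉ M.support := fun h => ((deleteIncidenceSet_adj.1 (M.adj_mate a h)).2.1 rfl)

noncomputable def deleteAt (M : MateFun G) (a : V) : MateFun (G.deleteIncidenceSet a) where
  mate v := if v = a ∨ M.mate v = a then v else M.mate v
  involutive v := by
    by_cases h : v = a ∨ M.mate v = a
    · simp only [if_pos h]
    · simp only [if_neg h, M.involutive v]
      rw [if_neg (by tauto)]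
  adj_mate v hv := by
    by_cases h : v = a ∨ M.mate v = a
    · simp [if_pos h] at hv
    · simp only [if_neg h] at hv ⊢
      exact deleteIncidenceSet_adj.2 ⟨M.adj_mate v hv, by tauto⟩

lemma support_deleteAt (M : MateFun G) (a : V) :
    (M.deleteAt a).support = M.support \ {a, M.mate a} := by
  ext v
  have : M.mate v = a ↔ v = M.mate a := by
    constructor <;> rintro rfl <;> simp [M.involutive _]
  by_cases h : v = a ∨ M.mate v = a <;>
    simp only [deleteAt, mem_support, Set.mem_sdiff, Set.mem_insert_iff, Set.mem_singleton_iff,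
      h, if_true, if_false, ne_eq, not_true] <;> tauto

noncomputable def addEdge (M : MateFun G) (hab : G.Adj a b) (ha : M.mate a = a)
    (hb : M.mate b = b) : MateFun G where
  mate v := if v = a then b else if v = b then a else M.mate v
  involutive v := by
    have hba : b ≠ a := hab.ne'
    by_cases hva : v = a
    · simp [hva, hba]
    by_cases hvb : v = b
    · simp [hvb, hba]
    have h1 : M.mate v ≠ a := fun h => hva (by rw [← M.involutive v, h, ha])
    have h2 : M.mate v ≠ b := fun h => hvb (by rw [← M.involutive v, h, hb])
    simp [hva, hvb, h1, h2, M.involutive v]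
  adj_mate v hv := by
    by_cases hva : v = a
    · subst hva; simpa using hab
    by_cases hvb : v = b
    · subst hvb; simpa [hva] using hab.symm
    simp only [hva, hvb, if_false] at hv ⊢
    exact M.adj_mate v hv

lemma mate_addEdge_left (hab : G.Adj a b) (ha : M.mate a = a) (hb : M.mate b = b) :
    (M.addEdge hab ha hb).mate a = b := if_pos rfl

lemma mate_addEdge_of_ne (hab : G.Adj a b) (ha : M.mate a = a) (hb : M.mate b = b)
    (hva : v ≠ a) (hvb : v ≠ b) : (M.addEdge hab ha hb).mate v = M.mate v := by
  simp [addEdge, hva, hvb]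

lemma support_addEdge (hab : G.Adj a b) (ha : M.mate a = a) (hb : M.mate b = b) :
    (M.addEdge hab ha hb).support = insert a (insert b M.support) := by
  ext v
  by_cases hva : v = a
  · subst hva; simp [addEdge, hab.ne']
  by_cases hvb : v = b
  · subst hvb; simp [addEdge, hva, hab.ne]
  simp [addEdge, hva, hvb]

noncomputable def piecewise (W : Set V) (N M : MateFun G) (hN : ∀ v ∈ W, N.mate v ∈ W)
    (hM : ∀ v ∈ W, M.mate v ∈ W) : MateFun G where
  mate v := if v ∈ W then N.mate v else M.mate v
  involutive v := by
    by_cases hv : v ∈ W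
    · simp only [if_pos hv, if_pos (hN v hv), N.involutive v]
    · have h : M.mate v ∉ W := fun h => hv (M.involutive v ▸ hM _ h)
      simp only [if_neg hv, if_neg h, M.involutive v]
  adj_mate v hv := by
    by_cases hW : v ∈ W
    · simp only [if_pos hW] at hv ⊢; exact N.adj_mate v hv
    · simp only [if_neg hW] at hv ⊢; exact M.adj_mate v hv

lemma support_piecewise (W : Set V) (N M : MateFun G) (hN : ∀ v ∈ W, N.mate v ∈ W)
    (hM : ∀ v ∈ W, M.mate v ∈ W) :
    (piecewise W N M hN hM).support = (M.support ∪ W \ M.support) \ (W \ N.support) := by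
  ext v
  by_cases hv : v ∈ W <;> simp [piecewise, hv]

lemma ncard_support_addEdge [Finite V] (hab : G.Adj a b) (ha : M.mate a = a)
    (hb : M.mate b = b) : (M.addEdge hab ha hb).support.ncard = M.support.ncard + 2 := by
  rw [support_addEdge, Set.ncard_insert_of_notMem (by simp [hab.ne, ha]),
    Set.ncard_insert_of_notMem (by simp [hb])]

lemma ncard_support_deleteAt_add_two [Finite V] (ha : a ∈ M.support) :
    (M.deleteAt a).support.ncard + 2 = M.support.ncard := by
  rw [support_deleteAt, ← Set.ncard_pair (Ne.symm ha),
    Set.ncard_sdiff_add_ncard_of_subset (Set.pair_subset ha (mate_mem_support ha))]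

section Maximum

variable [Finite V]

lemma even_ncard_support (M : MateFun G) : Even M.support.ncard := by
  have := Fintype.ofFinite V
  rw [← support_toSubgraph, M.isMatching_toSubgraph.support_eq_verts,
    Set.ncard_eq_toFinset_card']
  exact M.isMatching_toSubgraph.even_card

lemma bddAbove_range_ncard_support (G : SimpleGraph V) :
    BddAbove (Set.range fun M : MateFun G => M.support.ncard) :=
  ⟨Nat.card V, by rintro _ ⟨M, rfl⟩; exact Set.ncard_le_card _⟩

/-- Twice the matching number of `G`. -/
noncomputable def maxSupportCard (G : SimpleGraph V) : ℕ :=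
  sSup (Set.range fun M : MateFun G => M.support.ncard)

def IsMaximum (M : MateFun G) : Prop := M.support.ncard = maxSupportCard G

lemma ncard_support_le (M : MateFun G) : M.support.ncard ≤ maxSupportCard G :=
  le_csSup (bddAbove_range_ncard_support G) ⟨M, rfl⟩

lemma exists_isMaximum (G : SimpleGraph V) : ∃ M : MateFun G, M.IsMaximum :=
  Nat.sSup_mem (Set.range_nonempty _) (bddAbove_range_ncard_support G)

lemma even_maxSupportCard (G : SimpleGraph V) : Even (maxSupportCard G) := by
  obtain ⟨M, hM⟩ := exists_isMaximum G
  exact hM ▸ M.even_ncard_support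

lemma isMaxMatching_toSubgraph (hM : M.IsMaximum) : IsMaxMatching G M.toSubgraph :=
  ⟨M.isMatching_toSubgraph, fun N hN => by
    rw [support_toSubgraph, hM, ← support_ofIsMatching hN]
    exact ncard_support_le _⟩

lemma isMaximum_ofIsMatching {M : G.Subgraph} (hM : IsMaxMatching G M) :
    (ofIsMatching hM.1).IsMaximum := by
  obtain ⟨N, hN⟩ := exists_isMaximum G
  refine le_antisymm (ncard_support_le _) ?_
  rw [support_ofIsMatching, ← hN, ← support_toSubgraph]
  exact hM.2 _ N.isMatching_toSubgraph

lemma mem_Dset_iff : v ∈ Dset G ↔ ∃ M : MateFun G, M.IsMaximum ∧ v ∉ M.support := by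
  constructor
  · rintro ⟨M, hM, hv⟩
    exact ⟨ofIsMatching hM.1, isMaximum_ofIsMatching hM, by rwa [support_ofIsMatching]⟩
  · rintro ⟨M, hM, hv⟩
    exact ⟨M.toSubgraph, isMaxMatching_toSubgraph hM, by rwa [support_toSubgraph]⟩

lemma IsMaximum.mem_support (hM : M.IsMaximum) (hv : v ∉ Dset G) : v ∈ M.support :=
  by_contra fun h => hv (mem_Dset_iff.2 ⟨M, hM, h⟩)

end Maximum

section AlternatingWalk

variable (M N : MateFun G) (a : V)

noncomputable def stepMate (k : ℕ) : V → V := if Even k then N.mate else M.mate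

noncomputable def altWalk : ℕ → V
  | 0 => a
  | k + 1 => stepMate M N k (altWalk k)

lemma stepMate_involutive (k : ℕ) : Function.Involutive (stepMate M N k) := by
  unfold stepMate
  split_ifs
  exacts [N.involutive, M.involutive]

lemma stepMate_add_two_mul (k m : ℕ) : stepMate M N (k + 2 * m) = stepMate M N k := by
  simp [stepMate, Nat.even_add]

lemma altWalk_succ (k : ℕ) : altWalk M N a (k + 1) = stepMate M N k (altWalk M N a k) := rfl

lemma altWalk_eq_stepMate_altWalk_succ (k : ℕ) :
    altWalk M N a k = stepMate M N k (altWalk M N a (k + 1)) :=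
  (stepMate_involutive M N k _).symm

lemma reachable_altWalk (k : ℕ) : G.Reachable a (altWalk M N a k) := by
  induction k with
  | zero => rfl
  | succ k ih =>
    refine ih.trans ?_
    rw [altWalk_succ, stepMate]
    split_ifs
    exacts [N.reachable_mate _, M.reachable_mate _]

variable {M N a}

lemma eq_altWalk_two_mul_of_eq {i m : ℕ} (h : altWalk M N a i = altWalk M N a (i + 2 * m)) :
    a = altWalk M N a (2 * m) := by
  induction i with
  | zero => simpa [altWalk] using h
  | succ i ih =>
    apply ih
    rw [altWalk_eq_stepMate_altWalk_succ M N a i, h, show i + 1 + 2 * m = i + 2 * m + 1 by ring,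
      ← stepMate_add_two_mul M N i m, ← altWalk_eq_stepMate_altWalk_succ]

lemma exists_altWalk_succ_eq_of_eq_odd {i m : ℕ}
    (h : altWalk M N a i = altWalk M N a (i + 2 * m + 1)) :
    ∃ k < i + 2 * m + 1, altWalk M N a (k + 1) = altWalk M N a k := by
  induction m generalizing i with
  | zero => exact ⟨i, by omega, by simpa using h.symm⟩
  | succ m ih =>
    obtain ⟨k, hk, hk'⟩ := ih (i := i + 1) (by
      rw [altWalk_succ, h, show i + 1 + 2 * m + 1 = i + 2 * (m + 1) by ring,
        altWalk_eq_stepMate_altWalk_succ M N a (i + 2 * (m + 1)), stepMate_add_two_mul])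
    exact ⟨k, by omega, hk'⟩

/-- Two involutions generate a dihedral action, so a repeated vertex forces the walk to bounce
back at some step; at the start it bounces off `a` itself because `M.mate a = a`. -/
lemma exists_altWalk_succ_eq_of_eq (ha : M.mate a = a) {i j : ℕ} (hij : i < j)
    (h : altWalk M N a i = altWalk M N a j) :
    ∃ k < j, altWalk M N a (k + 1) = altWalk M N a k := by
  obtain ⟨m, hm | hm⟩ := Nat.even_or_odd' (j - i)
  · obtain ⟨m, rfl⟩ : ∃ m', m = m' + 1 := ⟨m - 1, by omega⟩
    have h0 := eq_altWalk_two_mul_of_eq (m := m + 1) (i := i)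
      (by rwa [show i + 2 * (m + 1) = j by omega])
    have h1 : altWalk M N a 0 = altWalk M N a (0 + 2 * m + 1) := by
      rw [altWalk_eq_stepMate_altWalk_succ M N a (0 + 2 * m + 1),
        show 0 + 2 * m + 1 + 1 = 2 * (m + 1) by ring, ← h0]
      simp [stepMate, ha, altWalk]
    obtain ⟨k, hk, hk'⟩ := exists_altWalk_succ_eq_of_eq_odd h1
    exact ⟨k, by omega, hk'⟩
  · obtain ⟨k, hk, hk'⟩ := exists_altWalk_succ_eq_of_eq_odd (i := i) (m := m)
      (by rwa [show i + 2 * m + 1 = j by omega])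
    exact ⟨k, by omega, hk'⟩

lemma exists_altWalk_succ_eq [Finite V] (ha : M.mate a = a) :
    ∃ k, altWalk M N a (k + 1) = altWalk M N a k := by
  obtain ⟨i, j, hne, h⟩ := Finite.exists_ne_map_eq_of_infinite (altWalk M N a)
  rcases hne.lt_or_gt with hij | hij
  · exact (exists_altWalk_succ_eq_of_eq ha hij h).imp fun _ hk => hk.2
  · exact (exists_altWalk_succ_eq_of_eq ha hij h.symm).imp fun _ hk => hk.2

-- At `k = 0` the truncated `k - 1` is `0`, which matches `M.mate a = a`.
lemma mate_altWalk (ha : M.mate a = a) (P : MateFun G) (hP : P = M ∨ P = N) (k : ℕ) :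
    P.mate (altWalk M N a k) = altWalk M N a (k - 1) ∨
      P.mate (altWalk M N a k) = altWalk M N a (k + 1) := by
  rcases k with _ | k
  · rcases hP with rfl | rfl
    · exact Or.inl ha
    · exact Or.inr rfl
  · rw [altWalk_succ M N a (k + 1), Nat.add_sub_cancel, altWalk_eq_stepMate_altWalk_succ M N a k]
    by_cases hk : Even k <;> rcases hP with rfl | rfl <;> simp [stepMate, hk, Nat.even_add_one]

lemma mate_mem_altWalk_image (ha : M.mate a = a) {s : ℕ}
    (hs : altWalk M N a (s + 1) = altWalk M N a s) {P : MateFun G} (hP : P = M ∨ P = N) {v : V}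
    (hv : v ∈ altWalk M N a '' Set.Iic s) : P.mate v ∈ altWalk M N a '' Set.Iic s := by
  obtain ⟨k, hk, rfl⟩ := hv
  have hmem : ∀ j ≤ s + 1, altWalk M N a j ∈ altWalk M N a '' Set.Iic s := fun j hj => by
    rcases (show j ≤ s ∨ j = s + 1 by omega) with hj | rfl
    exacts [⟨j, hj, rfl⟩, ⟨s, Set.self_mem_Iic, hs.symm⟩]
  rw [Set.mem_Iic] at hk
  rcases mate_altWalk ha P hP k with h | h <;> rw [h] <;> exact hmem _ (by omega)

lemma altWalk_image_sdiff_support (ha : M.mate a = a) {s : ℕ}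
    (hmin : ∀ k < s, altWalk M N a (k + 1) ≠ altWalk M N a k) {P : MateFun G}
    (hP : P = M ∨ P = N) :
    altWalk M N a '' Set.Iic s \ P.support = {a, altWalk M N a s} \ P.support := by
  ext v
  simp only [Set.mem_sdiff, Set.mem_insert_iff, Set.mem_singleton_iff, and_congr_left_iff]
  intro hv
  constructor
  · rintro ⟨k, hk, rfl⟩
    rw [Set.mem_Iic] at hk
    by_contra hne
    have hk0 : k ≠ 0 := fun h => hne (Or.inl (by rw [h]; rfl))
    have hks : k ≠ s := fun h => hne (Or.inr (by rw [h]))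
    apply hv
    rcases mate_altWalk ha P hP k with h | h <;> rw [mem_support, h]
    · have := hmin (k - 1) (by omega)
      rwa [Nat.sub_add_cancel (by omega), ne_comm] at this
    · exact hmin k (by omega)
  · rintro (rfl | rfl)
    exacts [⟨0, Nat.zero_le s, rfl⟩, ⟨s, Set.self_mem_Iic, rfl⟩]

/-- Up to its first standstill `s`, the alternating walk from `a` traces a path from `a` to
`w = altWalk s`, whose interior is covered by both matchings; the parity of `s` decides
which matching leaves `w` exposed. -/
theorem exists_alternating_path_set [Finite V] (ha : a ∉ M.support) (hNa : a ∈ N.support) :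
    ∃ w, w ≠ a ∧ G.Reachable a w ∧ ∃ W : Set V, (∀ v ∈ W, M.mate v ∈ W) ∧
      (∀ v ∈ W, N.mate v ∈ W) ∧
      (W \ M.support = {a, w} ∧ W \ N.support = ∅ ∨
        W \ M.support = {a} ∧ W \ N.support = {w}) := by
  rw [notMem_support] at ha
  rw [mem_support] at hNa
  obtain ⟨s, hs, hmin⟩ : ∃ s, altWalk M N a (s + 1) = altWalk M N a s ∧
      ∀ k < s, altWalk M N a (k + 1) ≠ altWalk M N a k := by
    classical
    have hex := exists_altWalk_succ_eq (N := N) ha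
    exact ⟨Nat.find hex, Nat.find_spec hex, fun k hk => Nat.find_min hex hk⟩
  obtain ⟨t, rfl⟩ : ∃ t, s = t + 1 :=
    Nat.exists_eq_succ_of_ne_zero fun h0 => hNa (by rw [h0] at hs; exact hs)
  have hwa : altWalk M N a (t + 1) ≠ a := fun h => by
    obtain ⟨k, hk, hk'⟩ := exists_altWalk_succ_eq_of_eq (i := 0) ha (by omega) h.symm
    exact hmin k hk hk'
  refine ⟨_, hwa, reachable_altWalk M N a _, _, fun v => mate_mem_altWalk_image ha hs (.inl rfl),
    fun v => mate_mem_altWalk_image ha hs (.inr rfl), ?_⟩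
  rw [altWalk_image_sdiff_support ha hmin (.inl rfl),
    altWalk_image_sdiff_support ha hmin (.inr rfl)]
  have hstep : stepMate M N t (altWalk M N a (t + 1)) ≠ altWalk M N a (t + 1) := by
    rw [altWalk_succ, stepMate_involutive]
    exact (hmin t (by omega)).symm
  rw [altWalk_succ] at hs
  generalize altWalk M N a (t + 1) = w at hs hstep hwa
  by_cases ht : Even t
  · simp only [stepMate, ht, Nat.even_add_one, not_true, if_true, if_false] at hs hstep
    left
    constructor <;> ext v <;> simp <;> grind
  · simp only [stepMate, ht, Nat.even_add_one, not_false_eq_true, if_true, if_false] at hs hstep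
    right
    constructor <;> ext v <;> simp <;> grind

theorem exists_augmenting_or_swapping [Finite V] (ha : a ∉ M.support) (hNa : a ∈ N.support) :
    ∃ w, w ≠ a ∧ G.Reachable a w ∧
      (w ∉ M.support ∧ w ∈ N.support ∧
          (∃ P : MateFun G, P.support = insert a (insert w M.support)) ∧
          (∃ Q : MateFun G, Q.support = N.support \ {a, w}) ∨
        w ∉ N.support ∧ ∃ Q : MateFun G, Q.support = insert w (N.support \ {a})) := by
  obtain ⟨w, hwa, hreach, W, hMW, hNW, ⟨hWM, hWN⟩ | ⟨hWM, hWN⟩⟩ :=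
    exists_alternating_path_set ha hNa
  · have hw : w ∈ W \ M.support := hWM ▸ Set.mem_insert_of_mem a rfl
    refine ⟨w, hwa, hreach, Or.inl ⟨hw.2, by_contra fun h => ?_,
      ⟨piecewise W N M hNW hMW, ?_⟩, piecewise W M N hMW hNW, ?_⟩⟩
    · exact (hWN ▸ ⟨hw.1, h⟩ : w ∈ (∅ : Set V))
    · rw [support_piecewise, hWM, hWN, Set.sdiff_empty, Set.union_insert, Set.union_singleton]
    · rw [support_piecewise, hWM, hWN, Set.union_empty]
  · have hw : w ∈ W \ N.support := hWN ▸ rfl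
    refine ⟨w, hwa, hreach, Or.inr ⟨hw.2, piecewise W M N hMW hNW, ?_⟩⟩
    rw [support_piecewise, hWM, hWN, Set.union_singleton,
      Set.insert_sdiff_of_notMem _ (Set.notMem_singleton_iff.2 hwa)]

end AlternatingWalk

end MateFun


open MateFun

section Stability

variable [Finite V] {a : V}

lemma maxSupportCard_deleteIncidenceSet_add_two (ha : a ∈ Aset G) :
    maxSupportCard (G.deleteIncidenceSet a) + 2 = maxSupportCard G := by
  obtain ⟨M, hM⟩ := exists_isMaximum G
  obtain ⟨M', hM'⟩ := exists_isMaximum (G.deleteIncidenceSet a)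
  have hdel := ncard_support_deleteAt_add_two (hM.mem_support ha.1)
  have hdel_le := (M.deleteAt a).ncard_support_le
  have hM'_le := (M'.mapLE (deleteIncidenceSet_le G a)).ncard_support_le
  rw [support_mapLE, hM'] at hM'_le
  have hne : maxSupportCard (G.deleteIncidenceSet a) ≠ maxSupportCard G := fun h =>
    ha.1 <| mem_Dset_iff.2 ⟨M'.mapLE (deleteIncidenceSet_le G a), by rw [IsMaximum,
      support_mapLE, hM', h], M'.notMem_support_of_deleteIncidenceSet⟩
  obtain ⟨k, hk⟩ := even_maxSupportCard G
  obtain ⟨k', hk'⟩ := even_maxSupportCard (G.deleteIncidenceSet a)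
  rw [IsMaximum] at hM
  omega

lemma Dset_subset_Dset_deleteIncidenceSet (ha : a ∈ Aset G) :
    Dset G ⊆ Dset (G.deleteIncidenceSet a) := by
  intro v hv
  obtain ⟨M, hM, hvM⟩ := mem_Dset_iff.1 hv
  refine mem_Dset_iff.2 ⟨M.deleteAt a, ?_, fun h => hvM (support_deleteAt M a ▸ h).1⟩
  have := ncard_support_deleteAt_add_two (hM.mem_support ha.1)
  have := maxSupportCard_deleteIncidenceSet_add_two ha
  rw [IsMaximum] at hM ⊢
  omega

lemma mem_Dset_deleteIncidenceSet_self (G : SimpleGraph V) (a : V) :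
    a ∈ Dset (G.deleteIncidenceSet a) :=
  let ⟨M, hM⟩ := exists_isMaximum _
  mem_Dset_iff.2 ⟨M, hM, M.notMem_support_of_deleteIncidenceSet⟩

/-- Take a maximum matching `M` of `G - a` missing `v` and a maximum matching `N` of `G` missing
a neighbour `d ∈ D(G)` of `a`, and follow the alternating path from `a`. It cannot end exposed
in `N` (that would put `a` in `D(G)`), so it augments `M`; either the augmented matching misses
`v`, or `v` is the end of the path and `N` minus the path plus the edge `ad` misses `v`. -/
lemma Dset_deleteIncidenceSet_subset (ha : a ∈ Aset G) :
    Dset (G.deleteIncidenceSet a) ⊆ insert a (Dset G) := by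
  intro v hv
  rw [Set.mem_insert_iff, or_iff_not_imp_left]
  intro hva
  obtain ⟨M', hM', hvM'⟩ := mem_Dset_iff.1 hv
  obtain ⟨d, hd, had⟩ := ha.2
  obtain ⟨N, hN, hdN⟩ := mem_Dset_iff.1 hd
  have hcard : (M'.mapLE (deleteIncidenceSet_le G a)).support.ncard + 2 = maxSupportCard G := by
    rw [support_mapLE, hM', maxSupportCard_deleteIncidenceSet_add_two ha]
  have haN := hN.mem_support ha.1
  obtain ⟨w, hwa, -, ⟨hwM, hwN, ⟨P, hP⟩, Q, hQ⟩ | ⟨hwN, Q, hQ⟩⟩ :=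
    exists_augmenting_or_swapping (M := M'.mapLE (deleteIncidenceSet_le G a))
      M'.notMem_support_of_deleteIncidenceSet haN
  · by_cases hvw : v = w
    · have haQ : Q.mate a = a := notMem_support.1 (by simp [hQ])
      have hdQ : Q.mate d = d := notMem_support.1 (by simp [hQ, hdN])
      have hQcard : Q.support.ncard + 2 = N.support.ncard := by
        rw [hQ, ← Set.ncard_pair hwa.symm, Set.ncard_sdiff_add_ncard_of_subset
          (Set.pair_subset haN hwN)]
      refine mem_Dset_iff.2 ⟨Q.addEdge had haQ hdQ, ?_, ?_⟩
      · rw [IsMaximum, ncard_support_addEdge, hQcard, hN]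
      · rw [support_addEdge, hQ]
        subst hvw
        simp [hva, show v ≠ d by rintro rfl; exact hdN hwN]
    · refine mem_Dset_iff.2 ⟨P, ?_, by simp [hP, hva, hvw, hvM']⟩
      rw [IsMaximum, hP, Set.ncard_insert_of_notMem (by simp [hwa.symm,
        M'.notMem_support_of_deleteIncidenceSet]), Set.ncard_insert_of_notMem hwM, ← hcard]
  · refine absurd (mem_Dset_iff.2 ⟨Q, ?_, by simp [hQ, hwa.symm]⟩) ha.1
    rw [IsMaximum, hQ, Set.ncard_insert_of_notMem (by simp [hwN]),
      Set.ncard_sdiff_singleton_add_one haN, hN]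

lemma Dset_deleteIncidenceSet (ha : a ∈ Aset G) :
    Dset (G.deleteIncidenceSet a) = insert a (Dset G) :=
  (Dset_deleteIncidenceSet_subset ha).antisymm <| Set.insert_subset
    (mem_Dset_deleteIncidenceSet_self G a) (Dset_subset_Dset_deleteIncidenceSet ha)

lemma Aset_deleteIncidenceSet (ha : a ∈ Aset G) :
    Aset (G.deleteIncidenceSet a) = Aset G \ {a} := by
  ext x
  simp only [Aset, Dset_deleteIncidenceSet ha, Set.mem_ofPred_eq, Set.mem_insert_iff,
    deleteIncidenceSet_adj, Set.mem_sdiff, Set.mem_singleton_iff]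
  have := ha.1
  grind

end Stability


/-- Lying in the same component of `G[D(G)]`, phrased with walks of `G` so that it can be
compared across different graphs on `V`. -/
def SameDComponent (G : SimpleGraph V) (x y : V) : Prop :=
  ∃ p : G.Walk x y, ∀ v ∈ p.support, v ∈ Dset G

lemma Walk.support_subset_of_adj_mem {S : Set V} (hS : ∀ u v, G.Adj u v → u ∈ S → v ∈ S)
    {x y : V} (p : G.Walk x y) (hx : x ∈ S) : ∀ v ∈ p.support, v ∈ S := by
  induction p with
  | nil => simpa
  | cons h p ih =>
    simp only [Walk.support_cons, List.mem_cons, forall_eq_or_imp]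
    exact ⟨hx, ih (hS _ _ h hx)⟩

lemma sameDComponent_of_reachable (hA : Aset G = ∅) {x y : V} (hx : x ∈ Dset G)
    (h : G.Reachable x y) : SameDComponent G x y :=
  let ⟨p⟩ := h
  ⟨p, p.support_subset_of_adj_mem (fun _ v huv hu => by_contra fun hv =>
    (hA ▸ (⟨hv, _, hu, huv.symm⟩ : v ∈ Aset G) : v ∈ (∅ : Set V))) hx⟩

lemma SameDComponent.of_deleteIncidenceSet [Finite V] {a x y : V} (ha : a ∈ Aset G)
    (hx : x ∈ Dset G) (h : SameDComponent (G.deleteIncidenceSet a) x y) :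
    SameDComponent G x y := by
  obtain ⟨p, hp⟩ := h
  have hpa := p.support_subset_of_adj_mem (S := {v | v ≠ a})
    (fun _ _ huv _ => (deleteIncidenceSet_adj.1 huv).2.2) fun h => ha.1 (h ▸ hx)
  refine ⟨p.mapLe (deleteIncidenceSet_le G a), fun v hv => ?_⟩
  rw [Walk.support_mapLe_eq_support] at hv
  exact ((Dset_deleteIncidenceSet ha ▸ hp v hv).resolve_left (hpa v hv))

lemma SameDComponent.connectedComponentMk_eq {x y : V} (h : SameDComponent G x y)
    (hx : x ∈ Dset G) (hy : y ∈ Dset G) :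
    (G.induce (Dset G)).connectedComponentMk ⟨x, hx⟩ =
      (G.induce (Dset G)).connectedComponentMk ⟨y, hy⟩ := by
  obtain ⟨p, hp⟩ := h
  exact ConnectedComponent.sound <| (p.connected_induce_support.preconnected
    ⟨x, p.start_mem_support⟩ ⟨y, p.end_mem_support⟩).map (induceHomOfLE G hp).toHom

section Realization

variable [Finite V] {T : Set V} {M : MateFun G}

lemma exists_isMaximum_ncard_inter_support_lt (hA : Aset G = ∅) (hTD : T ⊆ Dset G)
    (hT : T.Pairwise fun x y => ¬SameDComponent G x y) (hM : M.IsMaximum) {t : V}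
    (htT : t ∈ T) (htM : t ∈ M.support) :
    ∃ Q : MateFun G, Q.IsMaximum ∧ (T ∩ Q.support).ncard < (T ∩ M.support).ncard := by
  obtain ⟨N, hN, htN⟩ := mem_Dset_iff.1 (hTD htT)
  obtain ⟨w, hwt, hreach, ⟨hwN, -, ⟨P, hP⟩, -⟩ | ⟨hwM, Q, hQ⟩⟩ :=
    exists_augmenting_or_swapping htN htM
  · have := P.ncard_support_le
    rw [hP, Set.ncard_insert_of_notMem (by simp [hwt.symm, htN]),
      Set.ncard_insert_of_notMem hwN, hN] at this
    omega
  refine ⟨Q, ?_, Set.ncard_lt_ncard <| (Set.ssubset_iff_of_subset ?_).2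
    ⟨t, ⟨htT, htM⟩, by simp [hQ, hwt.symm]⟩⟩
  · rw [IsMaximum, hQ, Set.ncard_insert_of_notMem (by simp [hwM]),
      Set.ncard_sdiff_singleton_add_one htM, hM]
  · rintro v ⟨hvT, hvQ⟩
    rw [hQ] at hvQ
    rcases hvQ with rfl | hvQ
    · exact absurd (sameDComponent_of_reachable hA (hTD htT) hreach) (hT htT hvT hwt.symm)
    · exact ⟨hvT, hvQ.1⟩

lemma exists_isMaximum_forall_notMem_support (hA : Aset G = ∅) (hTD : T ⊆ Dset G)
    (hT : T.Pairwise fun x y => ¬SameDComponent G x y) :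
    ∃ M : MateFun G, M.IsMaximum ∧ ∀ t ∈ T, t ∉ M.support := by
  obtain ⟨M, hM, hmin⟩ := (measure fun M : MateFun G => (T ∩ M.support).ncard).wf.has_min
    {M | M.IsMaximum} (exists_isMaximum G)
  refine ⟨M, hM, fun t htT htM => ?_⟩
  obtain ⟨Q, hQ, hlt⟩ := exists_isMaximum_ncard_inter_support_lt hA hTD hT hM htT htM
  exact hmin Q hQ hlt

lemma exists_isMaximum_of_deleteIncidenceSet {a b : V} (ha : a ∈ Aset G) (hab : G.Adj a b)
    {M' : MateFun (G.deleteIncidenceSet a)} (hM' : M'.IsMaximum) (hb : b ∉ M'.support) :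
    ∃ M : MateFun G, M.IsMaximum ∧ M.mate a = b ∧
      ∀ v, v ≠ a → v ≠ b → M.mate v = M'.mate v := by
  set M := M'.mapLE (deleteIncidenceSet_le G a)
  have haM : M.mate a = a := notMem_support.1 M'.notMem_support_of_deleteIncidenceSet
  refine ⟨M.addEdge hab haM (notMem_support.1 hb), ?_, mate_addEdge_left .., fun v hva hvb =>
    mate_addEdge_of_ne _ _ _ hva hvb⟩
  rw [IsMaximum, ncard_support_addEdge, support_mapLE, hM',
    maxSupportCard_deleteIncidenceSet_add_two ha]

theorem exists_isMaximum_mate_eq (d : V → V) (hTD : T ⊆ Dset G)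
    (hT : T.Pairwise fun x y => ¬SameDComponent G x y)
    (hd : ∀ a ∈ Aset G, d a ∈ T ∧ G.Adj a (d a)) (hinj : Set.InjOn d (Aset G)) :
    ∃ M : MateFun G, M.IsMaximum ∧ (∀ a ∈ Aset G, M.mate a = d a) ∧
      ∀ t ∈ T \ d '' Aset G, t ∉ M.support := by
  induction hn : (Aset G).ncard generalizing G with
  | zero =>
    have hA : Aset G = ∅ := (Set.ncard_eq_zero).1 hn
    obtain ⟨M, hM, hMT⟩ := exists_isMaximum_forall_notMem_support hA hTD hT
    exact ⟨M, hM, by simp [hA], fun t ht => hMT t ht.1⟩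
  | succ n ih =>
    obtain ⟨a, ha⟩ := Set.nonempty_of_ncard_ne_zero (by omega : (Aset G).ncard ≠ 0)
    have hA' := Aset_deleteIncidenceSet ha
    have hdD : ∀ b ∈ Aset G, d b ∈ Dset G := fun b hb => hTD (hd b hb).1
    obtain ⟨M', hM', hM'd, hM'T⟩ := ih (G := G.deleteIncidenceSet a)
      (hTD.trans (Dset_subset_Dset_deleteIncidenceSet ha))
      (hT.imp_on fun x hx _ _ _ h h' => h (h'.of_deleteIncidenceSet ha (hTD hx)))
      (fun b hb => by
        rw [hA'] at hb
        refine ⟨(hd b hb.1).1, deleteIncidenceSet_adj.2 ⟨(hd b hb.1).2, hb.2, ?_⟩⟩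
        exact fun h => ha.1 (h ▸ hdD b hb.1))
      (hA' ▸ hinj.mono Set.sdiff_subset)
      (by rw [hA', Set.ncard_sdiff_singleton_of_mem ha, hn, Nat.add_sub_cancel])
    have hdaM' : d a ∉ M'.support := hM'T (d a) ⟨(hd a ha).1, fun ⟨b, hb, hba⟩ =>
      (hA' ▸ hb).2 (hinj (hA' ▸ hb).1 ha hba)⟩
    obtain ⟨M, hM, hMa, hMM'⟩ := exists_isMaximum_of_deleteIncidenceSet ha (hd a ha).2 hM' hdaM'
    refine ⟨M, hM, fun b hb => ?_, fun t ht => ?_⟩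
    · by_cases hba : b = a
      · exact hba ▸ hMa
      · rw [hMM' b hba fun h => hb.1 (h ▸ hdD a ha)]
        exact hM'd b (hA' ▸ ⟨hb, hba⟩)
    · have hta : t ≠ a := fun h => ha.1 (h ▸ hTD ht.1)
      have htda : t ≠ d a := fun h => ht.2 ⟨a, ha, h.symm⟩
      rw [notMem_support, hMM' t hta htda, ← notMem_support]
      exact hM'T t ⟨ht.1, fun ⟨b, hb, hbt⟩ => ht.2 ⟨b, (hA' ▸ hb).1, hbt⟩⟩

end Realization


theorem exists_isMaxMatching_matchesInto_iff [Finite V]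
    (f : Aset G → (G.induce (Dset G)).ConnectedComponent) (hf : Function.Injective f)
    (hadj : ∀ a, ∃ d : Dset G, (G.induce (Dset G)).connectedComponentMk d = f a ∧ G.Adj a d) :
    ∃ M : G.Subgraph, IsMaxMatching G M ∧
      ∀ a (ha : a ∈ Aset G) z, MatchesInto G M a z ↔ f ⟨a, ha⟩ = z := by
  choose e he hae using hadj
  let d : V → V := fun v => if hv : v ∈ Aset G then e ⟨v, hv⟩ else v
  have hd : ∀ a (ha : a ∈ Aset G), d a = e ⟨a, ha⟩ := fun a ha => dif_pos ha
  have hsame : ∀ a a', SameDComponent G (e a) (e a') → a = a' := fun a a' h =>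
    hf (by rw [← he, ← he]; exact h.connectedComponentMk_eq _ _)
  obtain ⟨M, hM, hMd, -⟩ := exists_isMaximum_mate_eq (T := Set.range fun a => (e a : V)) d
    (by rintro _ ⟨a, rfl⟩; exact (e a).2)
    (by rintro _ ⟨a, rfl⟩ _ ⟨a', rfl⟩ hne h; exact hne (by rw [hsame a a' h]))
    (fun a ha => ⟨hd a ha ▸ ⟨_, rfl⟩, hd a ha ▸ hae ⟨a, ha⟩⟩)
    (fun a ha a' ha' h => congrArg Subtype.val <| hf <| show f ⟨a, ha⟩ = f ⟨a', ha'⟩ by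
      rw [← he, ← he, Subtype.ext ((hd a ha).symm.trans (h.trans (hd a' ha')))])
  refine ⟨M.toSubgraph, isMaxMatching_toSubgraph hM, fun a ha z => ?_⟩
  have hMa : M.mate a = e ⟨a, ha⟩ := (hMd a ha).trans (hd a ha)
  constructor
  · rintro ⟨d', rfl, hd'⟩
    rw [MateFun.toSubgraph_adj, hMa] at hd'
    rw [← he, Subtype.ext hd'.2]
  · rintro rfl
    exact ⟨e ⟨a, ha⟩, he _, MateFun.toSubgraph_adj.2 ⟨(hae ⟨a, ha⟩).ne, hMa⟩⟩

end SimpleGraph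

section Birkhoff

open Matrix

lemma sum_subtype_eq_sum_of_eq_zero {ι M : Type*} [Fintype ι] [AddCommMonoid M] {p : ι → Prop}
    [DecidablePred p] (F : ι → M) (hF : ∀ i, ¬p i → F i = 0) :
    ∑ i : Subtype p, F i = ∑ i, F i := by
  rw [← Finset.sum_subtype (Finset.univ.filter p) (by simp)]
  exact Finset.sum_filter_of_ne fun i _ h => by_contra fun hp => h (hF i hp)

lemma sum_smul_permMatrix_apply {n R : Type*} [Fintype n] [DecidableEq n] [Semiring R]
    (w : Equiv.Perm n → R) (i j : n) :
    (∑ σ, w σ • σ.permMatrix R) i j = ∑ σ, if σ i = j then w σ else 0 := by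
  simp [Matrix.sum_apply, Equiv.Perm.permMatrix, PEquiv.toMatrix_apply]

variable {R α β : Type*} [Field R] [LinearOrder R] [IsStrictOrderedRing R]
  [Fintype α] [Fintype β] [DecidableEq α] [DecidableEq β]

lemma fromBlocks_mem_doublyStochastic (p : Matrix α β R) (hp : ∀ a z, 0 ≤ p a z)
    (hrow : ∀ a, ∑ z, p a z = 1) (hcol : ∀ z, ∑ a, p a z ≤ 1) :
    fromBlocks 0 p pᵀ (diagonal fun z => 1 - ∑ a, p a z) ∈
      doublyStochastic R (α ⊕ β) := by
  rw [mem_doublyStochastic_iff_sum]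
  refine ⟨?_, ?_, ?_⟩
  · rintro (a | z) (a' | z') <;> simp [hp, diagonal_apply]
    split_ifs <;> linarith [hcol z]
  · rintro (a | z) <;> simp [Fintype.sum_sum_type, hrow, diagonal_apply]
  · rintro (a | z) <;> simp [Fintype.sum_sum_type, hrow, diagonal_apply]

/-- Birkhoff decomposes the doubly stochastic completion of `p` into permutations; one of
positive weight only uses positive entries, so the zero block forces it to map `α` into `β`. -/
lemma exists_perm_weights (p : Matrix α β R) (hp : ∀ a z, 0 ≤ p a z)
    (hrow : ∀ a, ∑ z, p a z = 1) (hcol : ∀ z, ∑ a, p a z ≤ 1) :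
    ∃ wt : Equiv.Perm (α ⊕ β) → R, (∀ σ, 0 ≤ wt σ) ∧ ∑ σ, wt σ = 1 ∧
      (∀ σ, wt σ ≠ 0 → ∀ a, ∃ z, σ (.inl a) = .inr z ∧ p a z ≠ 0) ∧
      ∀ a z, ∑ σ, (if σ (.inl a) = .inr z then wt σ else 0) = p a z := by
  obtain ⟨wt, hwt0, hwt1, hwt⟩ :=
    exists_eq_sum_perm_of_mem_doublyStochastic (fromBlocks_mem_doublyStochastic p hp hrow hcol)
  set q := fromBlocks 0 p pᵀ (diagonal fun z => 1 - ∑ a, p a z)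
  have hq : ∀ x y, ∑ σ, (if σ x = y then wt σ else 0) = q x y := fun x y => by
    rw [← hwt, sum_smul_permMatrix_apply]
  refine ⟨wt, hwt0, hwt1, fun σ hσ a => ?_, fun a z => hq _ _⟩
  have hle : wt σ ≤ q (.inl a) (σ (.inl a)) := by
    rw [← hq]
    exact le_of_eq_of_le (by simp) <| Finset.single_le_sum
      (f := fun τ => if τ (.inl a) = σ (.inl a) then wt τ else 0)
      (fun τ _ => by split_ifs <;> simp [hwt0]) (Finset.mem_univ σ)
  have hpos : 0 < wt σ := (hwt0 σ).lt_of_ne' hσ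
  rcases h : σ (.inl a) with a' | z <;>
    rw [h] at hle <;> simp only [q, fromBlocks_apply₁₁, fromBlocks_apply₁₂] at hle
  · exact absurd hle (by simpa using hpos)
  · exact ⟨z, rfl, (hpos.trans_le hle).ne'⟩

theorem exists_convexCombination_injective (p : Matrix α β R) (hp : ∀ a z, 0 ≤ p a z)
    (hrow : ∀ a, ∑ z, p a z = 1) (hcol : ∀ z, ∑ a, p a z ≤ 1) :
    ∃ (k : ℕ) (f : Fin k → α → β) (w : Fin k → R), (∀ i, Function.Injective (f i)) ∧
      (∀ i a, p a (f i a) ≠ 0) ∧ (∀ i, 0 ≤ w i) ∧ ∑ i, w i = 1 ∧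
      ∀ a z, ∑ i, (if f i a = z then w i else 0) = p a z := by
  obtain ⟨wt, hwt0, hwt1, hσ, hwtp⟩ := exists_perm_weights p hp hrow hcol
  choose g hg hgp using fun σ : {σ // wt σ ≠ 0} => hσ σ σ.2
  set e := Fintype.equivFin {σ // wt σ ≠ 0}
  have hsum : ∀ F : Equiv.Perm (α ⊕ β) → R, (∀ σ, wt σ = 0 → F σ = 0) →
      ∑ i, F (e.symm i) = ∑ σ, F σ := fun F hF => by
    rw [Equiv.sum_comp e.symm (fun σ => F σ),
      sum_subtype_eq_sum_of_eq_zero F fun σ h => hF σ (not_not.1 h)]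
  refine ⟨_, fun i => g (e.symm i), fun i => wt (e.symm i), fun i a a' h => ?_,
    fun i => hgp _, fun i => hwt0 _, by rw [hsum wt fun _ => id, hwt1], fun a z => ?_⟩
  · exact Sum.inl_injective ((e.symm i).1.injective (by rw [hg, hg]; exact congrArg _ h))
  · have : ∀ σ, g σ a = z ↔ σ.1 (.inl a) = .inr z := fun σ => by simp [hg]
    simp_rw [this]
    rw [hsum (fun σ => if σ (.inl a) = .inr z then wt σ else 0) (by simp +contextual), hwtp]

end Birkhoff

open Classical in
/-- Any fractional perfect matching on the `A(G)` side of the contracted bipartite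
graph `G'` (each `a ∈ A(G)` distributes weight 1 over components of `G[D(G)]` it is
adjacent to, each component receiving total weight at most 1) is realized as the
edge-marginals of a probability distribution over maximum matchings of `G`. -/
theorem stmt15 {V : Type*} [Fintype V] (G : SimpleGraph V)
    [Fintype (G.induce (Dset G)).ConnectedComponent]
    (p : V → (G.induce (Dset G)).ConnectedComponent → ℝ)
    (hpos : ∀ a z, 0 ≤ p a z)
    (hedge : ∀ a z, p a z ≠ 0 → a ∈ Aset G ∧
      ∃ d : Dset G, (G.induce (Dset G)).connectedComponentMk d = z ∧ G.Adj a ↑d)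
    (hrow : ∀ a ∈ Aset G, ∑ z, p a z = 1)
    (hcol : ∀ z, ∑ a, p a z ≤ 1) :
    ∃ (k : ℕ) (M : Fin k → G.Subgraph) (w : Fin k → ℝ),
      (∀ i, IsMaxMatching G (M i)) ∧ (∀ i, 0 ≤ w i) ∧ (∑ i, w i = 1) ∧
      ∀ a ∈ Aset G, ∀ z,
        (∑ i, if MatchesInto G (M i) a z then w i else 0) = p a z := by
  obtain ⟨k, f, w, hinj, hfp, hw0, hw1, hfw⟩ := exists_convexCombination_injective
    (fun (a : Aset G) z => p a z) (fun a z => hpos a z) (fun a => hrow a a.2) fun z =>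
      (sum_subtype_eq_sum_of_eq_zero (p · z) fun a ha => by_contra fun h => ha (hedge a z h).1
        ).trans_le (hcol z)
  choose M hM hMf using fun i => SimpleGraph.exists_isMaxMatching_matchesInto_iff (f i) (hinj i)
    fun a => (hedge a (f i a) (hfp i a)).2
  refine ⟨k, M, w, hM, hw0, hw1, fun a ha z => ?_⟩
  simp_rw [hMf _ a ha z]
  exact hfw ⟨a, ha⟩ z
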